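/- Let l, k > 0, d ≥ 0 and v ∈ (0, k). Then the set Ψ_v = {(x,y) ∈ ℝ² : k³x² + (k(d+l)² − 4dlv)y² − 2k(kd − 2lv + kl)xy − 2k²lv·x + 2klv(d−l)·y + kl²v² = 0} is an ellipse (the image of the unit circle under an invertible affine map of ℝ²), Ψ_v is contained in the parallelogram D = convex hull of O=(0,0), P=(l,0), Q=(d,k), R=(l+d,k), and Ψ_v meets each of the four sides [O,P], [O,Q], [P,R], [Q,R] of D in exactly one point. -/

import Mathlib

/-- The unit circle in `ℝ × ℝ`. -/
def unitCircle : Set (ℝ × ℝ) := {p : ℝ × ℝ | p.1 ^ 2 + p.2 ^ 2 = 1}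

/-- A set is an ellipse if it is the image of the unit circle under an
invertible affine map of the plane. -/
def IsEllipse (E : Set (ℝ × ℝ)) : Prop :=
  ∃ f : (ℝ × ℝ) ≃ᵃ[ℝ] (ℝ × ℝ), E = (f : (ℝ × ℝ) → (ℝ × ℝ)) '' unitCircle

/-!
In the affine coordinates `(u, w) ↦ u • P + w • Q`, which carry the unit square onto `D`, and with
`a = v / k`, the equation of `Ψ_v` divided by `k³ l²` reads
`a (u + w - 1)² + (1 - a) (u - w)² = a (1 - a)`.
This conic is the image of the unit circle under
`(x, y) ↦ ((1 + √(1 - a) x + √a y) / 2, (1 + √(1 - a) x - √a y) / 2)`.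
Completing the square in `w` leaves `4 a (1 - a) u (1 - u)`, which forces `u ∈ [0, 1]`, and
symmetrically `w ∈ [0, 1]`. On each side of the square the equation collapses to a perfect square
such as `(u - a)² = 0`, so each side is touched exactly once. Invertible affine maps preserve
ellipses, convex hulls and segments, which carries all of this over to `Ψ_v` and `D`.
-/

open Set

noncomputable def finTwoProdAffineEquiv {K : Type*} [Field K] (a b c e : K) (h : a * e - b * c ≠ 0)
    (t : K × K) : (K × K) ≃ᵃ[K] K × K :=
  (Matrix.toLinearEquiv (Module.Basis.finTwoProd K) !![a, b; c, e]
    (by simpa [Matrix.det_fin_two_of] using h)).toAffineEquiv.trans (AffineEquiv.constVAdd K _ t)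

@[simp]
theorem finTwoProdAffineEquiv_apply {K : Type*} [Field K] (a b c e : K) (h : a * e - b * c ≠ 0)
    (t p : K × K) :
    finTwoProdAffineEquiv a b c e h t p = (a * p.1 + b * p.2 + t.1, c * p.1 + e * p.2 + t.2) := by
  ext <;> simp [finTwoProdAffineEquiv, Matrix.toLin_finTwoProd_apply, add_comm]

theorem IsEllipse.image {E : Set (ℝ × ℝ)} (hE : IsEllipse E) (f : (ℝ × ℝ) ≃ᵃ[ℝ] ℝ × ℝ) :
    IsEllipse (f '' E) := by
  obtain ⟨g, rfl⟩ := hE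
  exact ⟨g.trans f, by rw [AffineEquiv.coe_trans, image_comp]⟩

theorem Function.Bijective.eq_image_of_forall_mem_iff {α β : Type*} {f : α → β}
    (hf : Function.Bijective f) {s : Set β} {t : Set α} (h : ∀ q, f q ∈ s ↔ q ∈ t) :
    s = f '' t := by
  ext p
  obtain ⟨q, rfl⟩ := hf.2 p
  rw [hf.1.mem_set_image]
  exact h q

theorem AffineEquiv.image_inter_segment_eq_singleton {K V W : Type*} [Ring K] [PartialOrder K]
    [IsOrderedRing K] [AddCommGroup V] [Module K V] [AddCommGroup W] [Module K W] (f : V ≃ᵃ[K] W)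
    {s : Set V} {x y p : V} (h : s ∩ segment K x y = {p}) :
    f '' s ∩ segment K (f x) (f y) = {f p} := by
  rw [← image_singleton, ← h, image_inter f.injective]
  exact congrArg _ (image_segment K f.toAffineMap x y).symm

theorem inter_segment_eq_singleton_of_lineMap_mem_iff {K V : Type*} [Ring K] [PartialOrder K]
    [IsOrderedRing K] [AddCommGroup V] [Module K V] {s : Set V} {x y : V} {t₀ : K}
    (ht₀ : t₀ ∈ Icc 0 1) (h : ∀ t, AffineMap.lineMap x y t ∈ s ↔ t = t₀) :
    s ∩ segment K x y = {AffineMap.lineMap x y t₀} := by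
  ext p
  rw [segment_eq_image_lineMap]
  simp only [mem_inter_iff, mem_image, mem_singleton_iff]
  constructor
  · rintro ⟨hp, t, -, rfl⟩
    rw [(h t).1 hp]
  · rintro rfl
    exact ⟨(h t₀).2 rfl, t₀, ht₀, rfl⟩

theorem convexHull_unitSquare {K : Type*} [Field K] [LinearOrder K] [IsStrictOrderedRing K] :
    convexHull K {((0 : K), (0 : K)), (1, 0), (0, 1), (1, 1)} = Icc 0 1 := by
  have : ({((0 : K), (0 : K)), (1, 0), (0, 1), (1, 1)} : Set (K × K)) = {0, 1} ×ˢ {0, 1} := by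
    ext ⟨x, y⟩
    simp only [mem_insert_iff, mem_singleton_iff, Prod.mk.injEq, mem_prod]
    tauto
  rw [this, convexHull_prod, convexHull_pair, segment_eq_Icc zero_le_one, Icc_prod_eq]
  rfl

theorem eq_iff_eq_of_sub_eq_sq {R : Type*} [CommRing R] [IsReduced R] {x y t t₀ : R}
    (h : x - y = (t - t₀) ^ 2) : x = y ↔ t = t₀ := by
  rw [← sub_eq_zero, h, sq_eq_zero_iff, sub_eq_zero]

def inscribedConic (a : ℝ) : Set (ℝ × ℝ) :=
  {p | a * (p.1 + p.2 - 1) ^ 2 + (1 - a) * (p.1 - p.2) ^ 2 = a * (1 - a)}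

section inscribedConic

variable {a : ℝ}

theorem isEllipse_inscribedConic (ha : a ∈ Ioo 0 1) : IsEllipse (inscribedConic a) := by
  obtain ⟨ha0, ha1⟩ := ha
  set α := √(1 - a)
  set β := √a
  have hα : α ^ 2 = 1 - a := Real.sq_sqrt (by linarith)
  have hβ : β ^ 2 = a := Real.sq_sqrt ha0.le
  have hdet : α / 2 * (-β / 2) - β / 2 * (α / 2) ≠ 0 := by
    have : 0 < α * β := by positivity
    linarith
  refine ⟨finTwoProdAffineEquiv (α / 2) (β / 2) (α / 2) (-β / 2) hdet (1 / 2, 1 / 2),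
    Function.Bijective.eq_image_of_forall_mem_iff (AffineEquiv.bijective _) fun q => ?_⟩
  have hc : a * (1 - a) ≠ 0 := (mul_pos ha0 (sub_pos.2 ha1)).ne'
  simp only [inscribedConic, unitCircle, mem_ofPred_eq, finTwoProdAffineEquiv_apply]
  rw [← mul_right_inj' hc (b := q.1 ^ 2 + q.2 ^ 2), mul_one]
  constructor <;> intro h
  · linear_combination h - (a * q.1 ^ 2) * hα - ((1 - a) * q.2 ^ 2) * hβ
  · linear_combination h + (a * q.1 ^ 2) * hα + ((1 - a) * q.2 ^ 2) * hβ

theorem inscribedConic_subset_Icc (ha : a ∈ Ioo 0 1) : inscribedConic a ⊆ Icc 0 1 := by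
  obtain ⟨ha0, ha1⟩ := ha
  have hc : 0 < 4 * a * (1 - a) := by have := sub_pos.2 ha1; positivity
  have mem_Icc_of_sq_eq {s t : ℝ} (h : s ^ 2 = 4 * a * (1 - a) * (t * (1 - t))) : t ∈ Icc 0 1 := by
    have ht : 0 ≤ t * (1 - t) := (mul_nonneg_iff_of_pos_left hc).1 (h ▸ sq_nonneg s)
    constructor <;> nlinarith
  rintro ⟨u, w⟩ hp
  simp only [inscribedConic, mem_ofPred_eq] at hp
  have hu := mem_Icc_of_sq_eq (s := w - (a * (1 - u) + (1 - a) * u)) (t := u)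
    (by linear_combination hp)
  have hw := mem_Icc_of_sq_eq (s := u - (a * (1 - w) + (1 - a) * w)) (t := w)
    (by linear_combination hp)
  exact ⟨⟨hu.1, hw.1⟩, hu.2, hw.2⟩

theorem inscribedConic_inter_segment_bottom (ha : a ∈ Ioo 0 1) :
    inscribedConic a ∩ segment ℝ (0, 0) (1, 0) = {(a, 0)} := by
  convert inter_segment_eq_singleton_of_lineMap_mem_iff (Ioo_subset_Icc_self ha) fun t => ?_
    using 2
  · simp [AffineMap.lineMap_apply_module]
  · simp only [inscribedConic, mem_ofPred_eq, AffineMap.lineMap_apply_module, Prod.smul_mk,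
      smul_eq_mul, Prod.mk_add_mk]
    exact eq_iff_eq_of_sub_eq_sq (by ring)

theorem inscribedConic_inter_segment_left (ha : a ∈ Ioo 0 1) :
    inscribedConic a ∩ segment ℝ (0, 0) (0, 1) = {(0, a)} := by
  convert inter_segment_eq_singleton_of_lineMap_mem_iff (Ioo_subset_Icc_self ha) fun t => ?_
    using 2
  · simp [AffineMap.lineMap_apply_module]
  · simp only [inscribedConic, mem_ofPred_eq, AffineMap.lineMap_apply_module, Prod.smul_mk,
      smul_eq_mul, Prod.mk_add_mk]
    exact eq_iff_eq_of_sub_eq_sq (by ring)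

theorem inscribedConic_inter_segment_right (ha : a ∈ Ioo 0 1) :
    inscribedConic a ∩ segment ℝ (1, 0) (1, 1) = {(1, 1 - a)} := by
  have : 1 - a ∈ Icc (0 : ℝ) 1 := ⟨sub_nonneg.2 ha.2.le, sub_le_self _ ha.1.le⟩
  convert inter_segment_eq_singleton_of_lineMap_mem_iff this fun t => ?_ using 2
  · ext <;> simp [AffineMap.lineMap_apply_module]
  · simp only [inscribedConic, mem_ofPred_eq, AffineMap.lineMap_apply_module, Prod.smul_mk,
      smul_eq_mul, Prod.mk_add_mk]
    exact eq_iff_eq_of_sub_eq_sq (by ring)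

theorem inscribedConic_inter_segment_top (ha : a ∈ Ioo 0 1) :
    inscribedConic a ∩ segment ℝ (0, 1) (1, 1) = {(1 - a, 1)} := by
  have : 1 - a ∈ Icc (0 : ℝ) 1 := ⟨sub_nonneg.2 ha.2.le, sub_le_self _ ha.1.le⟩
  convert inter_segment_eq_singleton_of_lineMap_mem_iff this fun t => ?_ using 2
  · ext <;> simp [AffineMap.lineMap_apply_module]
  · simp only [inscribedConic, mem_ofPred_eq, AffineMap.lineMap_apply_module, Prod.smul_mk,
      smul_eq_mul, Prod.mk_add_mk]
    exact eq_iff_eq_of_sub_eq_sq (by ring)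

end inscribedConic

theorem stmt_3_general (l k d v : ℝ) (hl : 0 < l) (hk : 0 < k)
    (hv : v ∈ Set.Ioo (0 : ℝ) k)
    (Ψ : Set (ℝ × ℝ))
    (hΨ : Ψ = {p : ℝ × ℝ |
      k ^ 3 * p.1 ^ 2 + (k * (d + l) ^ 2 - 4 * d * l * v) * p.2 ^ 2
        - 2 * k * (k * d - 2 * l * v + k * l) * p.1 * p.2
        - 2 * k ^ 2 * l * v * p.1 + 2 * k * l * v * (d - l) * p.2 + k * l ^ 2 * v ^ 2 = 0}) :
    IsEllipse Ψ ∧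
    Ψ ⊆ convexHull ℝ {((0 : ℝ), (0 : ℝ)), (l, 0), (d, k), (l + d, k)} ∧
    (∃ p, Ψ ∩ segment ℝ ((0 : ℝ), (0 : ℝ)) (l, 0) = {p}) ∧
    (∃ p, Ψ ∩ segment ℝ ((0 : ℝ), (0 : ℝ)) (d, k) = {p}) ∧
    (∃ p, Ψ ∩ segment ℝ (l, (0 : ℝ)) (l + d, k) = {p}) ∧
    (∃ p, Ψ ∩ segment ℝ (d, k) (l + d, k) = {p}) := by
  obtain ⟨a, rfl⟩ : ∃ a, v = k * a := ⟨v / k, (mul_div_cancel₀ v hk.ne').symm⟩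
  have ha : a ∈ Ioo 0 1 := ⟨pos_of_mul_pos_right hv.1 hk.le, (mul_lt_iff_lt_one_right hk).1 hv.2⟩
  let φ := finTwoProdAffineEquiv l d 0 k (by simp [hl.ne', hk.ne']) 0
  have hΨφ : Ψ = φ '' inscribedConic a := by
    refine hΨ ▸ φ.bijective.eq_image_of_forall_mem_iff fun q => ?_
    simp only [inscribedConic, mem_ofPred_eq, φ, finTwoProdAffineEquiv_apply, Prod.fst_zero,
      Prod.snd_zero, add_zero, zero_mul, zero_add]
    rw [← mul_right_inj' (show k ^ 3 * l ^ 2 ≠ 0 by positivity) (c := a * (1 - a))]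
    constructor <;> intro h <;> linear_combination h
  have hO : φ (0, 0) = (0, 0) := by simp [φ]
  have hP : φ (1, 0) = (l, 0) := by simp [φ]
  have hQ : φ (0, 1) = (d, k) := by simp [φ]
  have hR : φ (1, 1) = (l + d, k) := by simp [φ]
  have hD := φ.toAffineMap.image_convexHull {(0, 0), (1, 0), (0, 1), (1, 1)}
  rw [convexHull_unitSquare, AffineEquiv.coe_toAffineMap] at hD
  simp only [image_insert_eq, image_singleton, hO, hP, hQ, hR] at hD
  rw [hΨφ, ← hD, ← hO, ← hP, ← hQ, ← hR]
  exact ⟨(isEllipse_inscribedConic ha).image φ, image_mono (inscribedConic_subset_Icc ha),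
    ⟨_, φ.image_inter_segment_eq_singleton (inscribedConic_inter_segment_bottom ha)⟩,
    ⟨_, φ.image_inter_segment_eq_singleton (inscribedConic_inter_segment_left ha)⟩,
    ⟨_, φ.image_inter_segment_eq_singleton (inscribedConic_inter_segment_right ha)⟩,
    ⟨_, φ.image_inter_segment_eq_singleton (inscribedConic_inter_segment_top ha)⟩⟩

theorem stmt_3 (l k d v : ℝ) (hl : 0 < l) (hk : 0 < k) (hd : 0 ≤ d)
    (hv : v ∈ Set.Ioo (0 : ℝ) k)
    (Ψ : Set (ℝ × ℝ))
    (hΨ : Ψ = {p : ℝ × ℝ |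
      k ^ 3 * p.1 ^ 2 + (k * (d + l) ^ 2 - 4 * d * l * v) * p.2 ^ 2
        - 2 * k * (k * d - 2 * l * v + k * l) * p.1 * p.2
        - 2 * k ^ 2 * l * v * p.1 + 2 * k * l * v * (d - l) * p.2 + k * l ^ 2 * v ^ 2 = 0}) :
    IsEllipse Ψ ∧
    Ψ ⊆ convexHull ℝ {((0 : ℝ), (0 : ℝ)), (l, 0), (d, k), (l + d, k)} ∧
    (∃ p, Ψ ∩ segment ℝ ((0 : ℝ), (0 : ℝ)) (l, 0) = {p}) ∧
    (∃ p, Ψ ∩ segment ℝ ((0 : ℝ), (0 : ℝ)) (d, k) = {p}) ∧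
    (∃ p, Ψ ∩ segment ℝ (l, (0 : ℝ)) (l + d, k) = {p}) ∧
    (∃ p, Ψ ∩ segment ℝ (d, k) (l + d, k) = {p}) :=
  stmt_3_general l k d v hl hk hv Ψ hΨ
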